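/- Automatic intertwining of synthesis operators: if (π₁, S₁, T₁, W₁) and (π₂, S₂, T₂, W₂) are linearly minimal homomorphism dilation systems of (φ, A, V) and R : W₁ → W₂ is a bijective linear map with R T₁ = T₂ and π₁(a) = R⁻¹ π₂(a) R for all a ∈ A, then S₂ R = S₁. -/
import Mathlib

open scoped TensorProduct

variable (k : Type*) [Field k] (A : Type*) [Ring A] [Algebra k A]
  (V : Type*) [AddCommGroup V] [Module k V]

/-- automatic intertwining of synthesis operators for linearly minimal
dilation systems: if `R T₁ = T₂` and `π₁(a) = R⁻¹ π₂(a) R` for all `a`, then `S₂ R = S₁`. -/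
theorem synthesis_automatically_intertwined (φ : A →ₗ[k] Module.End k V) (hφ : φ 1 = 1)
    (W₁ : Type*) [AddCommGroup W₁] [Module k W₁]
    (W₂ : Type*) [AddCommGroup W₂] [Module k W₂]
    (π₁ : A →ₐ[k] Module.End k W₁) (T₁ : V →ₗ[k] W₁) (S₁ : W₁ →ₗ[k] V)
    (hT₁ : Function.Injective T₁) (hS₁ : Function.Surjective S₁)
    (hdil₁ : ∀ a : A, (φ a : V →ₗ[k] V) = S₁ ∘ₗ (π₁ a : W₁ →ₗ[k] W₁) ∘ₗ T₁)
    (hmin₁ : Submodule.span k {w : W₁ | ∃ (a : A) (x : V), w = π₁ a (T₁ x)} = ⊤)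
    (π₂ : A →ₐ[k] Module.End k W₂) (T₂ : V →ₗ[k] W₂) (S₂ : W₂ →ₗ[k] V)
    (hT₂ : Function.Injective T₂) (hS₂ : Function.Surjective S₂)
    (hdil₂ : ∀ a : A, (φ a : V →ₗ[k] V) = S₂ ∘ₗ (π₂ a : W₂ →ₗ[k] W₂) ∘ₗ T₂)
    (hmin₂ : Submodule.span k {w : W₂ | ∃ (a : A) (x : V), w = π₂ a (T₂ x)} = ⊤)
    (R : W₁ ≃ₗ[k] W₂) (hRT : ∀ x : V, R (T₁ x) = T₂ x)
    (hRπ : ∀ (a : A) (w : W₁), π₁ a w = R.symm (π₂ a (R w))) :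
    ∀ w : W₁, S₂ (R w) = S₁ w := by
  intro w
  have hw : w ∈ Submodule.span k {w : W₁ | ∃ (a : A) (x : V), w = π₁ a (T₁ x)} := by
    rw [hmin₁]; trivial
  induction hw using Submodule.span_induction with
  | mem w hw =>
    obtain ⟨a, x, rfl⟩ := hw
    have h1 := congrArg (fun f : V →ₗ[k] V => f x) (hdil₁ a)
    have h2 := congrArg (fun f : V →ₗ[k] V => f x) (hdil₂ a)
    simp only [LinearMap.coe_comp, Function.comp_apply] at h1 h2
    calc S₂ (R (π₁ a (T₁ x))) = S₂ (π₂ a (T₂ x)) := by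
          rw [hRπ, LinearEquiv.apply_symm_apply, hRT]
      _ = S₁ (π₁ a (T₁ x)) := by rw [← h2, h1]
  | zero => simp
  | add x y _ _ hx hy => simp [hx, hy]
  | smul c x _ hx => simp [hx]
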